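/- Let (A,𝒜) be a measurable space, ν a probability measure, and h : A → ℝ measurable, upper-bounded on the support of ν, with ∫ exp(h) dν < ∞ and strictly positive. Then the supremum in the Donsker–Varadhan formula sup_{μ ≪ ν} { ∫ h dμ − KL(μ,ν) } is attained at the Gibbs distribution g defined by dg/dν = exp(h) / ∫ exp(h) dν, and at this g the value ∫ h dg − KL(g,ν) equals log ∫ exp(h) dν. -/

import Mathlib

/-!
The Gibbs measure `g = ν.tilted h` satisfies `log (dg/dν) = h - log ∫ exp h dν`, so integrating
against `g` gives the value `log ∫ exp h dν` at `g`; here `h ≤ C` is what makes `h` integrable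
for `g`, since `x exp x` is bounded on `(-∞, C]`. For any other `μ ≪ ν`, the same identity turns
`KL(μ, g)` into `KL(μ, ν) - ∫ h dμ + log ∫ exp h dν`, and Gibbs' inequality `KL(μ, g) ≥ 0` is
exactly the claimed upper bound.
-/

open MeasureTheory Real

lemma abs_mul_exp_le_of_le {x C : ℝ} (hx : x ≤ C) : |x * exp x| ≤ exp (2 * max C 0) := by
  have hsum : |x| + x ≤ 2 * max C 0 := by
    cases abs_cases x <;> cases max_cases C 0 <;> linarith
  calc |x * exp x| = |x| * exp x := by rw [abs_mul, abs_of_pos (exp_pos x)]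
    _ ≤ exp |x| * exp x := by
        gcongr
        linarith [add_one_le_exp |x|]
    _ = exp (|x| + x) := (exp_add _ _).symm
    _ ≤ exp (2 * max C 0) := exp_le_exp.mpr hsum

namespace MeasureTheory

variable {α : Type*} [MeasurableSpace α] {μ : Measure α} {f : α → ℝ}

lemma integrable_tilted_self_of_ae_le [IsFiniteMeasure μ]
    (hf : Integrable (fun x ↦ exp (f x)) μ) {C : ℝ} (hfC : ∀ᵐ x ∂μ, f x ≤ C) :
    Integrable f (μ.tilted f) := by
  rw [integrable_tilted_iff hf]
  have hf_meas : AEMeasurable f μ := aemeasurable_of_aemeasurable_exp hf.1.aemeasurable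
  refine (integrable_const (exp (2 * max C 0))).mono' (hf.1.mul hf_meas.aestronglyMeasurable) ?_
  filter_upwards [hfC] with x hx
  rw [smul_eq_mul, mul_comm, Real.norm_eq_abs]
  exact abs_mul_exp_le_of_le hx

lemma integral_sub_integral_llr_tilted_self [IsProbabilityMeasure μ]
    (hf : Integrable (fun x ↦ exp (f x)) μ) (hf_tilted : Integrable f (μ.tilted f)) :
    ∫ x, f x ∂(μ.tilted f) - ∫ x, llr (μ.tilted f) μ x ∂(μ.tilted f)
      = log (∫ x, exp (f x) ∂μ) := by
  have : IsProbabilityMeasure (μ.tilted f) := isProbabilityMeasure_tilted hf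
  have hllr : llr (μ.tilted f) μ =ᵐ[μ.tilted f] fun x ↦ f x - log (∫ x, exp (f x) ∂μ) :=
    (tilted_absolutelyContinuous μ f).ae_le (log_rnDeriv_tilted_left_self hf)
  rw [integral_congr_ae hllr, integral_sub hf_tilted (integrable_const _), integral_const,
    probReal_univ, one_smul, sub_sub_cancel]

lemma integral_sub_integral_llr_le_log_integral_exp {ν : Measure α}
    [IsProbabilityMeasure μ] [IsProbabilityMeasure ν] (hμν : μ ≪ ν) (hfμ : Integrable f μ)
    (h_llr : Integrable (llr μ ν) μ) (hfν : Integrable (fun x ↦ exp (f x)) ν) :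
    ∫ x, f x ∂μ - ∫ x, llr μ ν x ∂μ ≤ log (∫ x, exp (f x) ∂ν) := by
  have : IsProbabilityMeasure (ν.tilted f) := isProbabilityMeasure_tilted hfν
  have hgibbs := InformationTheory.integral_llr_add_sub_measure_univ_nonneg
    (hμν.trans (absolutelyContinuous_tilted hfν)) (integrable_llr_tilted_right hμν hfμ h_llr hfν)
  rw [integral_llr_tilted_right hμν hfμ hfν h_llr, probReal_univ, probReal_univ] at hgibbs
  linarith

end MeasureTheory

theorem donsker_varadhan_attained_gibbs_general
    {A : Type*} [MeasurableSpace A] (ν : Measure A) [IsProbabilityMeasure ν]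
    (h : A → ℝ)
    (hexp : Integrable (fun a => Real.exp (h a)) ν)
    (hbdd : ∃ C : ℝ, ∀ᵐ a ∂ν, h a ≤ C) :
    let g : Measure A := ν.withDensity
      (fun a => ENNReal.ofReal (Real.exp (h a) / ∫ a, Real.exp (h a) ∂ν))
    ((∫ a, h a ∂g) - ∫ a, Real.log ((g.rnDeriv ν a).toReal) ∂g
        = Real.log (∫ a, Real.exp (h a) ∂ν)) ∧
    ∀ μ : Measure A, IsProbabilityMeasure μ → μ ≪ ν →
      Integrable h μ →
      Integrable (fun a => Real.log ((μ.rnDeriv ν a).toReal)) μ →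
      (∫ a, h a ∂μ) - ∫ a, Real.log ((μ.rnDeriv ν a).toReal) ∂μ
        ≤ Real.log (∫ a, Real.exp (h a) ∂ν) := by
  obtain ⟨C, hC⟩ := hbdd
  exact ⟨integral_sub_integral_llr_tilted_self hexp (integrable_tilted_self_of_ae_le hexp hC),
    fun μ _ hμν hμ h_llr ↦ integral_sub_integral_llr_le_log_integral_exp hμν hμ h_llr hexp⟩

/-- The supremum in the Donsker–Varadhan formula is attained at the Gibbs
distribution `dg/dν = exp h / ∫ exp h dν`, where it equals `log ∫ exp h dν`. -/
theorem donsker_varadhan_attained_gibbs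
    {A : Type*} [MeasurableSpace A] (ν : Measure A) [IsProbabilityMeasure ν]
    (h : A → ℝ) (hmeas : Measurable h)
    (hexp : Integrable (fun a => Real.exp (h a)) ν)
    (hbdd : ∃ C : ℝ, ∀ᵐ a ∂ν, h a ≤ C)
    (hpos : 0 < ∫ a, Real.exp (h a) ∂ν) :
    let g : Measure A := ν.withDensity
      (fun a => ENNReal.ofReal (Real.exp (h a) / ∫ a, Real.exp (h a) ∂ν))
    ((∫ a, h a ∂g) - ∫ a, Real.log ((g.rnDeriv ν a).toReal) ∂g
        = Real.log (∫ a, Real.exp (h a) ∂ν)) ∧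
    ∀ μ : Measure A, IsProbabilityMeasure μ → μ ≪ ν →
      Integrable h μ →
      Integrable (fun a => Real.log ((μ.rnDeriv ν a).toReal)) μ →
      (∫ a, h a ∂μ) - ∫ a, Real.log ((μ.rnDeriv ν a).toReal) ∂μ
        ≤ Real.log (∫ a, Real.exp (h a) ∂ν) :=
  donsker_varadhan_attained_gibbs_general ν h hexp hbdd
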